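/- Let n > 2 be real, θ1 > 0, λ ∈ ℝ, p = (n+2)/(n−2). Let u : [0,θ1] → ℝ be continuously differentiable on [0,θ1], twice differentiable on (0,θ1), with u ≥ 0, u(θ1) = 0, u'(0) = 0, and u''(θ) + (n−1)·coth(θ)·u'(θ) + λ·u(θ) + u(θ)^p = 0 on (0,θ1). Let g : [0,θ1] → ℝ be three times continuously differentiable with g(0) = g'(0) = 0. Define f(θ) = (1/2)·g'(θ)·sinh^{n−1}(θ), A(θ) = (1/2)·(d/dθ)(f'(θ)·sinh^{n−1}(θ)) + λ·f(θ)·sinh^{n−1}(θ) + (λ/2)·(d/dθ)(g(θ)·sinh^{2n−2}(θ)), and B(θ) = f(θ)·sinh^{n−1}(θ) + (1/(p+1))·(d/dθ)(g(θ)·sinh^{2n−2}(θ)). Then ∫_0^{θ1} A(θ)·u(θ)² dθ + ∫_0^{θ1} B(θ)·u(θ)^{p+1} dθ = (1/2)·sinh^{2n−2}(θ1)·u'(θ1)²·g(θ1). -/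

import Mathlib

open Real Set

noncomputable section

/-- The hyperbolic cotangent. -/
def Real.coth (x : ℝ) : ℝ := Real.cosh x / Real.sinh x

/-- The multiplier `f(θ) = (1/2) g'(θ) sinh^{n-1}(θ)` of the Pohozaev argument. -/
def fAux (n θ1 : ℝ) (g : ℝ → ℝ) : ℝ → ℝ :=
  fun θ => (1 / 2) * derivWithin g (Icc 0 θ1) θ * Real.sinh θ ^ (n - 1)

/-- The coefficient
`A(θ) = (1/2)(f' sinh^{n-1})'(θ) + λ f(θ) sinh^{n-1}(θ) + (λ/2)(g sinh^{2n-2})'(θ)`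
of the Pohozaev identity. -/
def AAux (n θ1 lam : ℝ) (g : ℝ → ℝ) : ℝ → ℝ :=
  fun θ =>
    (1 / 2) * derivWithin
        (fun t => derivWithin (fAux n θ1 g) (Icc 0 θ1) t * Real.sinh t ^ (n - 1))
        (Icc 0 θ1) θ
      + lam * fAux n θ1 g θ * Real.sinh θ ^ (n - 1)
      + (lam / 2) * derivWithin
          (fun t => g t * Real.sinh t ^ (2 * n - 2)) (Icc 0 θ1) θ

/-- The coefficient
`B(θ) = f(θ) sinh^{n-1}(θ) + (1/(p+1))(g sinh^{2n-2})'(θ)`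
of the Pohozaev identity. -/
def BAux (n θ1 p : ℝ) (g : ℝ → ℝ) : ℝ → ℝ :=
  fun θ =>
    fAux n θ1 g θ * Real.sinh θ ^ (n - 1)
      + (1 / (p + 1)) * derivWithin
          (fun t => g t * Real.sinh t ^ (2 * n - 2)) (Icc 0 θ1) θ

open Topology MeasureTheory

/-!
On `(0, θ1)` the equation reads `(w u')' + w (λ u + u^p) = 0` with `w = sinh^{n-1}`. Multiplying
it by `g w² u'` and by `f w u`, with `f = g' w / 2`, and integrating by parts amounts to an explicit
primitive `H` of `A u² + B u^{p+1}`: the terms containing `u''` cancel by the equation, and those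
in `u'²` because `g' w² / 2 = f w`. Every term of `H` carries a factor `w`, so `H(0) = 0`; at `θ1`,
where `u = 0`, only `g (w u')² / 2` survives.
-/

lemma rpow_add_one_eq_rpow_mul {y : ℝ} (hy : y + 1 ≠ 0) (x : ℝ) : x ^ (y + 1) = x ^ y * x := by
  rcases eq_or_ne x 0 with rfl | hx
  · rw [zero_rpow hy, mul_zero]
  · exact rpow_add_one hx y

/-- With `V = w u'`, `M = g w²`, `K = f' w` and `f = g' w / 2` this is `H =`
`g (w u')² / 2 + g w² (λ u² / 2 + u^{p+1} / (p+1)) - f w u u' + f' w u² / 2`. -/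
def pohozaevPrimitive (lam p : ℝ) (g f u V M K : ℝ → ℝ) (t : ℝ) : ℝ :=
  1 / 2 * g t * V t ^ 2 + M t * (lam / 2 * u t ^ 2 + u t ^ (p + 1) / (p + 1))
    - f t * u t * V t + 1 / 2 * K t * u t ^ 2

theorem hasDerivAt_pohozaevPrimitive {lam p x w g₁ f₁ u₁ M₁ K₁ : ℝ} {g f u V M K : ℝ → ℝ}
    (hp : 0 ≤ p) (hg : HasDerivAt g g₁ x) (hf : HasDerivAt f f₁ x) (hu : HasDerivAt u u₁ x)
    (hV : HasDerivAt V (-(w * (lam * u x + u x ^ p))) x) (hM : HasDerivAt M M₁ x)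
    (hK : HasDerivAt K K₁ x) (hVx : V x = w * u₁) (hfx : f x = 1 / 2 * g₁ * w)
    (hMx : M x = g x * w ^ 2) (hKx : K x = f₁ * w) :
    HasDerivAt (pohozaevPrimitive lam p g f u V M K)
      ((1 / 2 * K₁ + lam * f x * w + lam / 2 * M₁) * u x ^ 2
        + (f x * w + 1 / (p + 1) * M₁) * u x ^ (p + 1)) x := by
  have hp1 : p + 1 ≠ 0 := by linarith
  have hup := hu.rpow_const (p := p + 1) (Or.inr (by linarith))
  have h := ((((hg.const_mul (1 / 2)).mul (hV.pow 2)).add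
    (hM.mul (((hu.pow 2).const_mul (lam / 2)).add (hup.div_const (p + 1))))).sub
    ((hf.mul hu).mul hV)).add ((hK.const_mul (1 / 2)).mul (hu.pow 2))
  refine h.congr_deriv ?_
  simp only [Pi.add_apply, Pi.pow_apply, Pi.mul_apply]
  rw [hVx, hfx, hMx, hKx, add_sub_cancel_right, rpow_add_one_eq_rpow_mul hp1]
  field_simp
  ring

lemma contDiff_sinh_rpow {c : ℝ} {k : ℕ} (hc : k ≤ c) : ContDiff ℝ k fun t => sinh t ^ c :=
  (contDiff_rpow_const_of_le hc).comp contDiff_sinh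

lemma continuous_sinh_rpow {c : ℝ} (hc : 0 ≤ c) : Continuous fun t => sinh t ^ c :=
  continuous_sinh.rpow_const fun _ => Or.inr hc

lemma sinh_rpow_mul_sinh_rpow {a b t : ℝ} (ht : 0 ≤ t) (hab : a + b ≠ 0) :
    sinh t ^ a * sinh t ^ b = sinh t ^ (a + b) :=
  (rpow_add' (sinh_nonneg_iff.2 ht) hab).symm

lemma sinh_rpow_sub_one_sq {n t : ℝ} (ht : 0 ≤ t) :
    (sinh t ^ (n - 1)) ^ 2 = sinh t ^ (2 * n - 2) := by
  rw [← rpow_natCast, ← rpow_mul (sinh_nonneg_iff.2 ht)]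
  ring_nf

lemma hasDerivAt_sinh_rpow_mul_of_ode {n lam p θ u₂ : ℝ} {u u' : ℝ → ℝ} (hθ : 0 < θ)
    (hu' : HasDerivAt u' u₂ θ)
    (hode : u₂ + (n - 1) * coth θ * u' θ + lam * u θ + u θ ^ p = 0) :
    HasDerivAt (fun t => sinh t ^ (n - 1) * u' t)
      (-(sinh θ ^ (n - 1) * (lam * u θ + u θ ^ p))) θ := by
  have hs : sinh θ ≠ 0 := (sinh_pos_iff.2 hθ).ne'
  refine (((hasDerivAt_sinh θ).rpow_const (p := n - 1) (Or.inl hs)).mul hu').congr_deriv ?_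
  rw [coth] at hode
  rw [rpow_sub_one hs]
  linear_combination sinh θ ^ (n - 1) * hode

section Regularity

variable {n θ1 : ℝ} {g : ℝ → ℝ}

lemma contDiffOn_fAux (hn : 2 ≤ n) (hθ1 : 0 < θ1) (hg : ContDiffOn ℝ 3 g (Icc 0 θ1)) :
    ContDiffOn ℝ 1 (fAux n θ1 g) (Icc 0 θ1) :=
  (contDiffOn_const.mul (hg.derivWithin (uniqueDiffOn_Icc hθ1) (by norm_num))).mul
    (contDiff_sinh_rpow (c := n - 1) (by push_cast; linarith)).contDiffOn

lemma contDiffOn_derivWithin_fAux_mul_sinh_rpow (hn : 2 ≤ n) (hθ1 : 0 < θ1)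
    (hg : ContDiffOn ℝ 3 g (Icc 0 θ1)) :
    ContDiffOn ℝ 1 (fun t => derivWithin (fAux n θ1 g) (Icc 0 θ1) t * sinh t ^ (n - 1))
      (Icc 0 θ1) := by
  have hI := uniqueDiffOn_Icc hθ1
  set g₁ := derivWithin g (Icc 0 θ1)
  set g₂ := derivWithin g₁ (Icc 0 θ1)
  have hg₁ : ContDiffOn ℝ 2 g₁ (Icc 0 θ1) := hg.derivWithin hI (by norm_num)
  have hg₂ : ContDiffOn ℝ 1 g₂ (Icc 0 θ1) := hg₁.derivWithin hI (by norm_num)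
  have hW := contDiff_sinh_rpow (k := 1) (c := 2 * n - 2) (by push_cast; linarith)
  have hW' := contDiff_sinh_rpow (k := 1) (c := 2 * n - 3) (by push_cast; linarith)
  have hsmooth : ContDiffOn ℝ 1 (fun t => 1 / 2 * g₂ t * sinh t ^ (2 * n - 2)
      + (n - 1) / 2 * g₁ t * (cosh t * sinh t ^ (2 * n - 3))) (Icc 0 θ1) :=
    ((contDiffOn_const.mul hg₂).mul hW.contDiffOn).add ((contDiffOn_const.mul
      (hg₁.of_le (by norm_num))).mul (contDiff_cosh.contDiffOn.mul hW'.contDiffOn))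
  refine hsmooth.congr fun x hx => ?_
  have hf : HasDerivWithinAt (fAux n θ1 g)
      (1 / 2 * g₂ x * sinh x ^ (n - 1) + 1 / 2 * g₁ x * (cosh x * (n - 1) * sinh x ^ (n - 1 - 1)))
      (Icc 0 θ1) x :=
    (((hg₁.differentiableOn (by norm_num) x hx).hasDerivWithinAt.const_mul (1 / 2)).mul
      ((hasDerivAt_sinh x).rpow_const (Or.inr (by linarith))).hasDerivWithinAt)
  have hmul : sinh x ^ (n - 1 - 1) * sinh x ^ (n - 1) = sinh x ^ (2 * n - 3) := by
    rw [sinh_rpow_mul_sinh_rpow hx.1 (by linarith)]; ring_nf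
  rw [hf.derivWithin (hI x hx)]
  linear_combination (1 / 2 * g₂ x) * sinh_rpow_sub_one_sq hx.1
    + ((n - 1) / 2 * g₁ x * cosh x) * hmul

lemma contDiffOn_mul_sinh_rpow {c : ℝ} {s : Set ℝ} (hc : 1 ≤ c) (hg : ContDiffOn ℝ 1 g s) :
    ContDiffOn ℝ 1 (fun t => g t * sinh t ^ c) s :=
  hg.mul (contDiff_sinh_rpow (by push_cast; exact hc)).contDiffOn

lemma continuousOn_AAux (lam : ℝ) (hn : 2 ≤ n) (hθ1 : 0 < θ1)
    (hg : ContDiffOn ℝ 3 g (Icc 0 θ1)) : ContinuousOn (AAux n θ1 lam g) (Icc 0 θ1) := by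
  have hI := uniqueDiffOn_Icc hθ1
  have hK := (contDiffOn_derivWithin_fAux_mul_sinh_rpow hn hθ1 hg).continuousOn_derivWithin
    hI le_rfl
  have hM := (contDiffOn_mul_sinh_rpow (c := 2 * n - 2) (by linarith)
    (hg.of_le (by norm_num))).continuousOn_derivWithin hI le_rfl
  have hf := (contDiffOn_fAux hn hθ1 hg).continuousOn
  have hw := (continuous_sinh_rpow (c := n - 1) (by linarith)).continuousOn (s := Icc 0 θ1)
  exact ((continuousOn_const.mul hK).add ((continuousOn_const.mul hf).mul hw)).add
    (continuousOn_const.mul hM)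

lemma continuousOn_BAux (p : ℝ) (hn : 2 ≤ n) (hθ1 : 0 < θ1)
    (hg : ContDiffOn ℝ 3 g (Icc 0 θ1)) : ContinuousOn (BAux n θ1 p g) (Icc 0 θ1) := by
  have hM := (contDiffOn_mul_sinh_rpow (c := 2 * n - 2) (by linarith)
    (hg.of_le (by norm_num))).continuousOn_derivWithin (uniqueDiffOn_Icc hθ1) le_rfl
  have hf := (contDiffOn_fAux hn hθ1 hg).continuousOn
  have hw := (continuous_sinh_rpow (c := n - 1) (by linarith)).continuousOn (s := Icc 0 θ1)
  exact (hf.mul hw).add (continuousOn_const.mul hM)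

end Regularity

section Primitive

variable {n θ1 lam p : ℝ} {g u u' : ℝ → ℝ}

def sinhPohozaevPrimitive (n θ1 lam p : ℝ) (g u u' : ℝ → ℝ) : ℝ → ℝ :=
  pohozaevPrimitive lam p g (fAux n θ1 g) u (fun t => sinh t ^ (n - 1) * u' t)
    (fun t => g t * sinh t ^ (2 * n - 2))
    (fun t => derivWithin (fAux n θ1 g) (Icc 0 θ1) t * sinh t ^ (n - 1))

lemma hasDerivAt_sinhPohozaevPrimitive {x u₂ : ℝ} (hn : 2 ≤ n) (hp : 0 ≤ p)
    (hg : ContDiffOn ℝ 3 g (Icc 0 θ1)) (hx : x ∈ Ioo 0 θ1) (hu : HasDerivAt u (u' x) x)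
    (hu' : HasDerivAt u' u₂ x)
    (hode : u₂ + (n - 1) * coth x * u' x + lam * u x + u x ^ p = 0) :
    HasDerivAt (sinhPohozaevPrimitive n θ1 lam p g u u')
      (AAux n θ1 lam g x * u x ^ 2 + BAux n θ1 p g x * u x ^ (p + 1)) x := by
  have hθ1 : 0 < θ1 := hx.1.trans hx.2
  have hx' : Icc 0 θ1 ∈ 𝓝 x := Icc_mem_nhds hx.1 hx.2
  have hderiv {F : ℝ → ℝ} (hF : DifferentiableOn ℝ F (Icc 0 θ1)) :
      HasDerivAt F (derivWithin F (Icc 0 θ1) x) x := by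
    rw [derivWithin_of_mem_nhds hx']
    exact hF.hasDerivAt hx'
  exact hasDerivAt_pohozaevPrimitive hp (hderiv (hg.differentiableOn (by norm_num)))
    (hderiv ((contDiffOn_fAux hn hθ1 hg).differentiableOn one_ne_zero)) hu
    (hasDerivAt_sinh_rpow_mul_of_ode hx.1 hu' hode)
    (hderiv ((contDiffOn_mul_sinh_rpow (by linarith) (hg.of_le (by norm_num))).differentiableOn
      one_ne_zero))
    (hderiv ((contDiffOn_derivWithin_fAux_mul_sinh_rpow hn hθ1 hg).differentiableOn one_ne_zero))
    rfl rfl (by rw [sinh_rpow_sub_one_sq hx.1.le]) rfl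

lemma continuousOn_sinhPohozaevPrimitive (hn : 2 ≤ n) (hθ1 : 0 < θ1) (hp : 0 ≤ p)
    (hg : ContDiffOn ℝ 3 g (Icc 0 θ1)) (hu : ContinuousOn u (Icc 0 θ1))
    (hu' : ContinuousOn u' (Icc 0 θ1)) :
    ContinuousOn (sinhPohozaevPrimitive n θ1 lam p g u u') (Icc 0 θ1) := by
  have hw := (continuous_sinh_rpow (c := n - 1) (by linarith)).continuousOn (s := Icc 0 θ1)
  have hup := (continuous_rpow_const (q := p + 1) (by linarith)).comp_continuousOn hu
  have := hg.continuousOn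
  have := (contDiffOn_fAux hn hθ1 hg).continuousOn
  have := (contDiffOn_derivWithin_fAux_mul_sinh_rpow hn hθ1 hg).continuousOn
  have := (contDiffOn_mul_sinh_rpow (c := 2 * n - 2) (by linarith)
    (hg.of_le (by norm_num))).continuousOn
  unfold sinhPohozaevPrimitive pohozaevPrimitive
  fun_prop

lemma sinhPohozaevPrimitive_zero (hn : n ≠ 1) : sinhPohozaevPrimitive n θ1 lam p g u u' 0 = 0 := by
  have hw : sinh 0 ^ (n - 1) = 0 := by rw [sinh_zero, zero_rpow (sub_ne_zero.2 hn)]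
  have hW : sinh 0 ^ (2 * n - 2) = 0 := by
    rw [← sinh_rpow_sub_one_sq le_rfl, hw, sq, mul_zero]
  simp only [sinhPohozaevPrimitive, pohozaevPrimitive, fAux, hw, hW]
  ring

lemma sinhPohozaevPrimitive_of_eq_zero {θ : ℝ} (hθ : 0 ≤ θ) (hp : p + 1 ≠ 0) (hu : u θ = 0) :
    sinhPohozaevPrimitive n θ1 lam p g u u' θ = 1 / 2 * sinh θ ^ (2 * n - 2) * u' θ ^ 2 * g θ := by
  simp only [sinhPohozaevPrimitive, pohozaevPrimitive, hu, zero_rpow hp, ← sinh_rpow_sub_one_sq hθ]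
  ring

end Primitive

theorem pohozaev_identity_general (n θ1 lam p : ℝ)
    (hn : 2 < n) (hθ1 : 0 < θ1) (hp : p = (n + 2) / (n - 2))
    (u u' u'' : ℝ → ℝ)
    (hu : ∀ θ ∈ Icc (0:ℝ) θ1, HasDerivWithinAt u (u' θ) (Icc 0 θ1) θ)
    (hu'cont : ContinuousOn u' (Icc 0 θ1))
    (hu'' : ∀ θ ∈ Ioo (0:ℝ) θ1, HasDerivAt u' (u'' θ) θ)
    (huθ1 : u θ1 = 0)
    (hode : ∀ θ ∈ Ioo (0:ℝ) θ1,
      u'' θ + (n - 1) * Real.coth θ * u' θ + lam * u θ + u θ ^ p = 0)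
    (g : ℝ → ℝ) (hg : ContDiffOn ℝ 3 g (Icc 0 θ1)) :
    (∫ θ in (0:ℝ)..θ1, AAux n θ1 lam g θ * (u θ) ^ 2)
      + (∫ θ in (0:ℝ)..θ1, BAux n θ1 p g θ * u θ ^ (p + 1))
      = (1 / 2) * Real.sinh θ1 ^ (2 * n - 2) * (u' θ1) ^ 2 * g θ1 := by
  have hp0 : 0 ≤ p := hp ▸ (div_pos (by linarith) (by linarith)).le
  have hucont : ContinuousOn u (Icc 0 θ1) := fun θ hθ => (hu θ hθ).continuousWithinAt
  have hA : IntervalIntegrable (fun θ => AAux n θ1 lam g θ * u θ ^ 2) volume 0 θ1 :=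
    ((continuousOn_AAux lam hn.le hθ1 hg).mul (hucont.pow 2)).intervalIntegrable_of_Icc hθ1.le
  have hB : IntervalIntegrable (fun θ => BAux n θ1 p g θ * u θ ^ (p + 1)) volume 0 θ1 :=
    ((continuousOn_BAux p hn.le hθ1 hg).mul
      ((continuous_rpow_const (by linarith)).comp_continuousOn hucont)).intervalIntegrable_of_Icc
      hθ1.le
  have hH : ∀ x ∈ Ioo 0 θ1, HasDerivAt (sinhPohozaevPrimitive n θ1 lam p g u u')
      (AAux n θ1 lam g x * u x ^ 2 + BAux n θ1 p g x * u x ^ (p + 1)) x := fun x hx =>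
    hasDerivAt_sinhPohozaevPrimitive hn.le hp0 hg hx
      ((hu x (Ioo_subset_Icc_self hx)).hasDerivAt (Icc_mem_nhds hx.1 hx.2)) (hu'' x hx) (hode x hx)
  rw [← intervalIntegral.integral_add hA hB, intervalIntegral.integral_eq_sub_of_hasDerivAt_of_le
    hθ1.le (continuousOn_sinhPohozaevPrimitive hn.le hθ1 hp0 hg hucont hu'cont) hH (hA.add hB),
    sinhPohozaevPrimitive_zero (by linarith), sinhPohozaevPrimitive_of_eq_zero hθ1.le
    (by linarith) huθ1, sub_zero]

/-- Equation (4.5): the Pohozaev-type identity for nonnegative radial solutions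
of the Brezis–Nirenberg equation on hyperbolic space, with a `C³` multiplier
`g` satisfying `g(0) = g'(0) = 0`. -/
theorem pohozaev_identity (n θ1 lam p : ℝ)
    (hn : 2 < n) (hθ1 : 0 < θ1) (hp : p = (n + 2) / (n - 2))
    (u u' u'' : ℝ → ℝ)
    (hu : ∀ θ ∈ Icc (0:ℝ) θ1, HasDerivWithinAt u (u' θ) (Icc 0 θ1) θ)
    (hu'cont : ContinuousOn u' (Icc 0 θ1))
    (hu'' : ∀ θ ∈ Ioo (0:ℝ) θ1, HasDerivAt u' (u'' θ) θ)
    (hupos : ∀ θ ∈ Icc (0:ℝ) θ1, 0 ≤ u θ)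
    (huθ1 : u θ1 = 0) (hu'0 : u' 0 = 0)
    (hode : ∀ θ ∈ Ioo (0:ℝ) θ1,
      u'' θ + (n - 1) * Real.coth θ * u' θ + lam * u θ + u θ ^ p = 0)
    (g : ℝ → ℝ) (hg : ContDiffOn ℝ 3 g (Icc 0 θ1))
    (hg0 : g 0 = 0) (hg'0 : derivWithin g (Icc 0 θ1) 0 = 0) :
    (∫ θ in (0:ℝ)..θ1, AAux n θ1 lam g θ * (u θ) ^ 2)
      + (∫ θ in (0:ℝ)..θ1, BAux n θ1 p g θ * u θ ^ (p + 1))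
      = (1 / 2) * Real.sinh θ1 ^ (2 * n - 2) * (u' θ1) ^ 2 * g θ1 :=
  pohozaev_identity_general n θ1 lam p hn hθ1 hp u u' u'' hu hu'cont hu'' huθ1 hode g hg
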